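/- Let p, q ∈ ℂ with 0 < |p| < 1 and q ≠ 0, and let L = {pᵐ qⁿ : m, n ∈ ℤ}. Then for every x ∈ ℂ, x ≠ 0, with x ∉ L, one has F₂(x) = f(x)² · f(x q) · f(x q⁻¹), i.e., the structure function governing the self-exchange of the fused current T₂^q is the product of the deformed Virasoro structure functions at the four point-ratios x, x, xq, xq⁻¹. -/

import Mathlib

/-! Write every factor as `(x pᵐ qⁿ; p²)_∞` with `m, n ∈ ℤ`; replacing `x` by `x q^k` only shifts
`n` by `k`. After this relabelling, the identity follows from the functional equation
`(a; p²)_∞ = (1 - a) (a p²; p²)_∞` at `a = x, x q, x q⁻¹`. Off the lattice `L` all the factors are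
nonzero, because for `|p| < 1` the products converge absolutely, and the remaining step is
cancellation of rational expressions. -/

/-- The infinite product `(a; b)_∞ = ∏_{n ≥ 0} (1 - a bⁿ)`. -/
noncomputable def qPoch (a b : ℂ) : ℂ := ∏' n : ℕ, (1 - a * b ^ n)

/-- The structure function `f(x)` of the deformed Virasoro algebra (formula (6)):
`f(x) = (1-x)⁻¹ (xq; p²)_∞ (xpq⁻¹; p²)_∞ / ((xpq; p²)_∞ (xp²q⁻¹; p²)_∞)`. -/
noncomputable def fDV (p q x : ℂ) : ℂ :=
  (1 - x)⁻¹ * (qPoch (x * q) (p ^ 2) * qPoch (x * p * q⁻¹) (p ^ 2)) /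
    (qPoch (x * p * q) (p ^ 2) * qPoch (x * p ^ 2 * q⁻¹) (p ^ 2))

/-- The structure function `F₂(x)` of the self-exchange of the fused current `T₂^q`:
`F₂(x) = (1-x)⁻¹ (xp²q;p²)_∞ (xpq⁻¹;p²)_∞² (xq;p²)_∞ (xq²;p²)_∞ (xpq⁻²;p²)_∞ /
  ((xpq;p²)_∞² (xq⁻¹;p²)_∞ (xpq²;p²)_∞ (xp²q⁻²;p²)_∞ (xp²q⁻¹;p²)_∞)`. -/
noncomputable def F2 (p q x : ℂ) : ℂ :=
  (1 - x)⁻¹ *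
    (qPoch (x * p ^ 2 * q) (p ^ 2) * qPoch (x * p * q⁻¹) (p ^ 2) ^ 2 *
      qPoch (x * q) (p ^ 2) * qPoch (x * q ^ 2) (p ^ 2) * qPoch (x * p * q⁻¹ ^ 2) (p ^ 2)) /
    (qPoch (x * p * q) (p ^ 2) ^ 2 * qPoch (x * q⁻¹) (p ^ 2) *
      qPoch (x * p * q ^ 2) (p ^ 2) * qPoch (x * p ^ 2 * q⁻¹ ^ 2) (p ^ 2) *
      qPoch (x * p ^ 2 * q⁻¹) (p ^ 2))

section qPoch

variable {a b : ℂ}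

lemma summable_norm_neg_mul_pow (hb : ‖b‖ < 1) : Summable fun n : ℕ => ‖-(a * b ^ n)‖ := by
  simpa [norm_mul, norm_pow] using
    (summable_geometric_of_lt_one (norm_nonneg b) hb).mul_left ‖a‖

lemma multipliable_one_sub_mul_pow (hb : ‖b‖ < 1) :
    Multipliable fun n : ℕ => 1 - a * b ^ n := by
  simpa only [sub_eq_add_neg] using
    multipliable_one_add_of_summable (summable_norm_neg_mul_pow hb)

lemma qPoch_ne_zero (hb : ‖b‖ < 1) (h : ∀ n : ℕ, a * b ^ n ≠ 1) : qPoch a b ≠ 0 := by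
  simpa only [qPoch, sub_eq_add_neg] using
    tprod_one_add_ne_zero_of_summable
      (fun n => by rw [← sub_eq_add_neg]; exact sub_ne_zero.2 (h n).symm)
      (summable_norm_neg_mul_pow hb)

lemma qPoch_eq_one_sub_mul_qPoch_mul (hb : ‖b‖ < 1) : qPoch a b = (1 - a) * qPoch (a * b) b := by
  have hmul : Multipliable fun n : ℕ => 1 - a * b ^ (n + 1) := by
    simpa only [pow_succ', mul_assoc] using multipliable_one_sub_mul_pow (a := a * b) hb
  rw [qPoch, tprod_eq_zero_mul' (f := fun n => 1 - a * b ^ n) hmul, qPoch, pow_zero, mul_one]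
  congr 1
  exact tprod_congr fun n => by ring

end qPoch

noncomputable def latticePoch (p q x : ℂ) (m n : ℤ) : ℂ := qPoch (x * p ^ m * q ^ n) (p ^ 2)

lemma norm_sq_lt_one {p : ℂ} (hp1 : ‖p‖ < 1) : ‖p ^ 2‖ < 1 := by
  rw [norm_pow]
  exact pow_lt_one₀ (norm_nonneg p) hp1 two_ne_zero

section latticePoch

variable {p q x : ℂ}

lemma fDV_eq_latticePoch : fDV p q x = (1 - x)⁻¹ *
    (latticePoch p q x 0 1 * latticePoch p q x 1 (-1)) /
      (latticePoch p q x 1 1 * latticePoch p q x 2 (-1)) := by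
  simp [fDV, latticePoch]

lemma F2_eq_latticePoch : F2 p q x = (1 - x)⁻¹ *
    (latticePoch p q x 2 1 * latticePoch p q x 1 (-1) ^ 2 * latticePoch p q x 0 1 *
      latticePoch p q x 0 2 * latticePoch p q x 1 (-2)) /
    (latticePoch p q x 1 1 ^ 2 * latticePoch p q x 0 (-1) * latticePoch p q x 1 2 *
      latticePoch p q x 2 (-2) * latticePoch p q x 2 (-1)) := by
  simp [F2, latticePoch]

lemma latticePoch_mul_zpow (hq : q ≠ 0) (k m n : ℤ) :
    latticePoch p q (x * q ^ k) m n = latticePoch p q x m (n + k) := by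
  rw [latticePoch, latticePoch, zpow_add₀ hq]
  ring_nf

lemma fDV_mul_zpow (hq : q ≠ 0) (k : ℤ) : fDV p q (x * q ^ k) = (1 - x * q ^ k)⁻¹ *
    (latticePoch p q x 0 (1 + k) * latticePoch p q x 1 (-1 + k)) /
      (latticePoch p q x 1 (1 + k) * latticePoch p q x 2 (-1 + k)) := by
  simp only [fDV_eq_latticePoch, latticePoch_mul_zpow hq]

lemma mul_zpow_mul_zpow_ne_one (hxL : ¬ ∃ m n : ℤ, x = p ^ m * q ^ n) (m n : ℤ) :
    x * p ^ m * q ^ n ≠ 1 := fun h => hxL ⟨-m, -n, by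
  rw [zpow_neg, zpow_neg, ← mul_inv]
  exact eq_inv_of_mul_eq_one_left (by rwa [← mul_assoc])⟩

lemma latticePoch_ne_zero (hp : p ≠ 0) (hp1 : ‖p‖ < 1)
    (hxL : ¬ ∃ m n : ℤ, x = p ^ m * q ^ n) (m n : ℤ) : latticePoch p q x m n ≠ 0 := by
  refine qPoch_ne_zero (norm_sq_lt_one hp1) fun k => ?_
  have h := mul_zpow_mul_zpow_ne_one hxL (m + 2 * k) n
  rw [zpow_add₀ hp, zpow_mul, zpow_ofNat, zpow_natCast] at h
  convert h using 1
  ring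

lemma latticePoch_eq_one_sub_mul (hp : p ≠ 0) (hp1 : ‖p‖ < 1) (m n : ℤ) :
    latticePoch p q x m n = (1 - x * p ^ m * q ^ n) * latticePoch p q x (m + 2) n := by
  rw [latticePoch, qPoch_eq_one_sub_mul_qPoch_mul (norm_sq_lt_one hp1), latticePoch,
    zpow_add₀ hp, zpow_ofNat]
  ring_nf

end latticePoch

theorem F2_eq_f_sq_mul_f_mul_f_general
    (p q x : ℂ) (hp0 : 0 < ‖p‖) (hp1 : ‖p‖ < 1) (hq : q ≠ 0)
    (hxL : ¬ ∃ m n : ℤ, x = p ^ m * q ^ n) :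
    F2 p q x = (fDV p q x) ^ 2 * fDV p q (x * q) * fDV p q (x * q⁻¹) := by
  have hp : p ≠ 0 := norm_pos_iff.mp hp0
  have hL := latticePoch_ne_zero (q := q) hp hp1 hxL
  have h1 := fun n : ℤ => sub_ne_zero.2 (mul_zpow_mul_zpow_ne_one hxL 0 n).symm
  have hfq := fDV_mul_zpow (p := p) (x := x) hq 1
  have hfq_inv := fDV_mul_zpow (p := p) (x := x) hq (-1)
  norm_num at hfq hfq_inv h1
  rw [F2_eq_latticePoch, fDV_eq_latticePoch, hfq, hfq_inv, latticePoch_eq_one_sub_mul hp hp1 0 0,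
    latticePoch_eq_one_sub_mul hp hp1 0 1, latticePoch_eq_one_sub_mul hp hp1 0 (-1)]
  norm_num
  field_simp [hL 2 1, hL 1 (-1), hL 0 2, hL 1 (-2), hL 1 1, hL 1 2, hL 2 (-2), hL 2 (-1),
    hL 1 0, hL 2 0, h1 0, h1 1, h1 (-1)]

/-- The structure function of the self-exchange of the fused current `T₂^q` factors
through the deformed-Virasoro structure function: `F₂(x) = f(x)² f(xq) f(xq⁻¹)`
for `x ∉ L = pᶻqᶻ`. -/
theorem F2_eq_f_sq_mul_f_mul_f
    (p q x : ℂ) (hp0 : 0 < ‖p‖) (hp1 : ‖p‖ < 1) (hq : q ≠ 0)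
    (hx : x ≠ 0) (hxL : ¬ ∃ m n : ℤ, x = p ^ m * q ^ n) :
    F2 p q x = (fDV p q x) ^ 2 * fDV p q (x * q) * fDV p q (x * q⁻¹) :=
  F2_eq_f_sq_mul_f_mul_f_general p q x hp0 hp1 hq hxL
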